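/- Let p be a prime, q = p^m, and k a positive integer with k ∣ q − 1. If k does not divide (q − 1)/(p − 1), then there exists an index j ∈ {0, …, k − 1} such that the cyclotomic Gaussian period η_j is not a rational number. -/

import Mathlib

/-!
If all Gaussian periods were rational, so would be every Fourier coefficient
`∑_{s ∈ S} ψ (c s)` of the set `S` of nonzero `k`-th powers, where `ψ x = exp (2πi Tr x / p)`:
for `c ≠ 0` it is a Gaussian period. A rational number written as an integer combination of
powers of `ζ = exp (2πi / p)` is fixed by the Galois automorphisms `ζ ↦ ζ ^ a`, which replace
`c` by `a c` for `a ∈ 𝔽_pˣ`; by Fourier inversion `S` is then stable under `𝔽_pˣ`. In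
particular the generator `ω ^ ((q - 1) / (p - 1))` of `𝔽_pˣ` is a `k`-th power, forcing
`k ∣ (q - 1) / (p - 1)`.
-/

open Polynomial Finset
open scoped Classical

/-- The `i`-th cyclotomic Gaussian period for the pair `(k, q)`, where `q = #F`,
`ω` is a generator of `Fˣ` and the coset `ω^i⟨ω^k⟩` is described as
`{ω^i y^k : y ∈ Fˣ}`. -/
noncomputable def gaussianPeriod (p : ℕ) (F : Type) [Field F] [Fintype F]
    [Algebra (ZMod p) F] (ω : Fˣ) (k i : ℕ) : ℂ :=
  ∑ x ∈ Finset.univ.filter (fun x : Fˣ => ∃ y : Fˣ, x = ω ^ i * y ^ k),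
    Complex.exp (2 * Real.pi * Complex.I *
      ((Algebra.trace (ZMod p) F (x : F)).val : ℂ) / (p : ℂ))

/-- The complex adjacency matrix of the generalized Paley (di)graph `Γ(k,q)`:
there is an arrow from `u` to `v` iff `v - u` is a nonzero `k`-th power. -/
noncomputable def gpAdj (F : Type) [Field F] [Fintype F] (k : ℕ) : Matrix F F ℂ :=
  Matrix.of fun u v => if ∃ x : Fˣ, v - u = (x : F) ^ k then 1 else 0

/-- The generalized Paley graph `Γ(k,q)` as a simple graph (when the connection
set is symmetric, `fromRel` gives exactly the intended graph). -/
def gpGraph (F : Type) [Field F] (k : ℕ) : SimpleGraph F :=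
  SimpleGraph.fromRel fun u v => ∃ x : Fˣ, v - u = (x : F) ^ k

namespace AddChar

variable {R R' : Type*} [CommRing R] [Fintype R] [DecidableEq R] [CommRing R'] [IsDomain R']
  {ψ : AddChar R R'}

lemma sum_sum_mulShift_sub (hψ : ψ.IsPrimitive) (S : Finset R) (y : R) :
    ∑ c : R, ∑ s ∈ S, ψ (c * (s - y)) = if y ∈ S then (Fintype.card R : R') else 0 := by
  rw [Finset.sum_comm]
  simp [sum_mulShift _ hψ, sub_eq_zero]

lemma finset_eq_of_sum_mulShift_eq [CharZero R'] (hψ : ψ.IsPrimitive) {S T : Finset R}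
    (h : ∀ c, ∑ s ∈ S, ψ (c * s) = ∑ t ∈ T, ψ (c * t)) : S = T := by
  have inversion (U : Finset R) (y : R) :
      ∑ c : R, (∑ s ∈ U, ψ (c * s)) * ψ (-(c * y)) =
        if y ∈ U then (Fintype.card R : R') else 0 := by
    simp_rw [← sum_sum_mulShift_sub hψ, Finset.sum_mul, ← map_add_eq_mul, mul_sub,
      sub_eq_add_neg]
  have hcard : (Fintype.card R : R') ≠ 0 := Nat.cast_ne_zero.mpr Fintype.card_ne_zero
  ext y
  have hST := inversion S y
  simp_rw [h, inversion T y] at hST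
  by_cases hS : y ∈ S <;> by_cases hT : y ∈ T <;> simp [hS, hT, hcard, hcard.symm] at hST ⊢

end AddChar

theorem IsPrimitiveRoot.coeff_eq_of_aeval_eq_zero {p : ℕ} (hp : p.Prime) {K : Type*} [Field K]
    [CharZero K] {ζ : K} (hζ : IsPrimitiveRoot ζ p) {P : ℚ[X]} (hdeg : P.natDegree < p)
    (hP : aeval ζ P = 0) {i j : ℕ} (hi : i < p) (hj : j < p) : P.coeff i = P.coeff j := by
  have : Fact p.Prime := ⟨hp⟩
  have hdvd : cyclotomic p ℚ ∣ P := by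
    rw [cyclotomic_eq_minpoly_rat hζ hp.pos]
    exact minpoly.dvd ℚ ζ hP
  have hP_eq := eq_leadingCoeff_mul_of_monic_of_dvd_of_natDegree_le (cyclotomic.monic p ℚ) hdvd
    (by rw [natDegree_cyclotomic, Nat.totient_prime hp]; omega)
  have hcoeff {l : ℕ} (hl : l < p) : (cyclotomic p ℚ).coeff l = 1 := by
    simp [cyclotomic_prime, coeff_X_pow, hl]
  rw [hP_eq, coeff_C_mul, coeff_C_mul, hcoeff hi, hcoeff hj]

theorem IsPrimitiveRoot.eq_of_sum_mul_pow_val_eq_ratCast {p : ℕ} [Fact p.Prime] {K : Type*}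
    [Field K] [CharZero K] {ζ : K} (hζ : IsPrimitiveRoot ζ p) (n : ZMod p → ℚ) (r : ℚ)
    (h : ∑ t, (n t : K) * ζ ^ t.val = r) {s t : ZMod p} (hs : s ≠ 0) (ht : t ≠ 0) :
    n s = n t := by
  have hp : p.Prime := Fact.out
  set P : ℚ[X] := ∑ t, C (n t) * X ^ t.val - C r
  have hdeg : P.natDegree < p := by
    refine (natDegree_sub_le _ _).trans_lt (max_lt ?_ (by simpa using hp.pos))
    refine (natDegree_sum_le_of_forall_le _ _ fun t _ =>
      (natDegree_C_mul_X_pow_le (n t) t.val).trans (Nat.le_pred_of_lt (ZMod.val_lt t)))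
      |>.trans_lt ?_
    exact Nat.pred_lt hp.ne_zero
  have hP : aeval ζ P = 0 := by simp [P, h]
  have hcoeff {u : ZMod p} (hu : u ≠ 0) : P.coeff u.val = n u := by
    simp [P, finsetSum_coeff, (ZMod.val_injective p).eq_iff, coeff_C, hu]
  rw [← hcoeff hs, ← hcoeff ht]
  exact hζ.coeff_eq_of_aeval_eq_zero hp hdeg hP (ZMod.val_lt s) (ZMod.val_lt t)

namespace ZMod

variable {p : ℕ}

lemma stdAddChar_eq_pow_val [NeZero p] (t : ZMod p) :
    stdAddChar t = Complex.exp (2 * Real.pi * Complex.I / p) ^ t.val := by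
  rw [stdAddChar_apply, toCircle_apply, ← Complex.exp_nat_mul]
  congr 1
  ring

variable [Fact p.Prime]

/-- The Galois automorphism `ζ ↦ ζ ^ a` of `ℚ(ζ)` fixes rational numbers. -/
lemma sum_mul_stdAddChar_mul_eq_of_eq_ratCast (n : ZMod p → ℚ) (r : ℚ)
    (h : ∑ t, (n t : ℂ) * stdAddChar t = r) {a : ZMod p} (ha : a ≠ 0) :
    ∑ t, (n t : ℂ) * stdAddChar (a * t) = ∑ t, (n t : ℂ) * stdAddChar t := by
  have hζ := Complex.isPrimitiveRoot_exp p (Fact.out : p.Prime).ne_zero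
  simp_rw [stdAddChar_eq_pow_val] at h
  have hn {s t : ZMod p} (hs : s ≠ 0) (ht : t ≠ 0) : n s = n t :=
    hζ.eq_of_sum_mul_pow_val_eq_ratCast n r h hs ht
  calc ∑ t, (n t : ℂ) * stdAddChar (a * t) = ∑ t, (n (a * t) : ℂ) * stdAddChar (a * t) := by
        refine Fintype.sum_congr _ _ fun t => ?_
        rcases eq_or_ne t 0 with rfl | ht
        · rw [mul_zero]
        · rw [hn ht (mul_ne_zero ha ht)]
    _ = _ := Fintype.sum_bijective (a * ·) (mulLeft_bijective₀ a ha) _ _ fun _ => rfl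

end ZMod

section TraceAddChar

variable (p : ℕ) (F : Type*) [Field F] [Algebra (ZMod p) F]

noncomputable def traceAddChar [NeZero p] : AddChar F ℂ :=
  (ZMod.stdAddChar (N := p)).compAddMonoidHom (Algebra.trace (ZMod p) F).toAddMonoidHom

variable {F}

lemma traceAddChar_apply [NeZero p] (x : F) :
    traceAddChar p F x = ZMod.stdAddChar (Algebra.trace (ZMod p) F x) := rfl

variable [Fact p.Prime]

lemma isPrimitive_traceAddChar [Finite F] : (traceAddChar p F).IsPrimitive := by
  refine AddChar.IsPrimitive.of_ne_one (AddChar.ne_one_iff.mpr ?_)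
  obtain ⟨x, hx⟩ := Algebra.trace_surjective (ZMod p) F 1
  refine ⟨x, ?_⟩
  rw [traceAddChar_apply, hx, ← (ZMod.stdAddChar (N := p)).map_zero_eq_one,
    ZMod.injective_stdAddChar.ne_iff]
  exact one_ne_zero

lemma sum_traceAddChar_smul_eq_of_eq_ratCast {ι : Type*} (S : Finset ι) (g : ι → F) (r : ℚ)
    (h : ∑ i ∈ S, traceAddChar p F (g i) = r) {a : ZMod p} (ha : a ≠ 0) :
    ∑ i ∈ S, traceAddChar p F (a • g i) = ∑ i ∈ S, traceAddChar p F (g i) := by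
  set n : ZMod p → ℚ := fun t => #{i ∈ S | Algebra.trace (ZMod p) F (g i) = t}
  have fiberwise (f : ZMod p → ℂ) :
      ∑ i ∈ S, f (Algebra.trace (ZMod p) F (g i)) = ∑ t, (n t : ℂ) * f t := by
    rw [← Finset.sum_fiberwise S (fun i => Algebra.trace (ZMod p) F (g i))]
    refine Fintype.sum_congr _ _ fun t => ?_
    rw [Finset.sum_congr rfl fun i hi => by rw [(Finset.mem_filter.mp hi).2], Finset.sum_const,
      nsmul_eq_mul]
    simp [n]
  simp_rw [traceAddChar_apply, map_smul, smul_eq_mul] at h ⊢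
  rw [fiberwise (fun t => ZMod.stdAddChar (a * t)), fiberwise ZMod.stdAddChar]
  rw [fiberwise] at h
  exact ZMod.sum_mul_stdAddChar_mul_eq_of_eq_ratCast n r h ha

lemma smul_mem_of_forall_sum_eq_ratCast [Fintype F] (S : Finset F)
    (hS : ∀ c, ∃ r : ℚ, ∑ s ∈ S, traceAddChar p F (c * s) = r) {a : ZMod p} (ha : a ≠ 0)
    {x : F} (hx : x ∈ S) : a • x ∈ S := by
  have hinj : Function.Injective (a • · : F → F) := smul_right_injective F ha
  have : S.image (a • ·) = S := by
    refine AddChar.finset_eq_of_sum_mulShift_eq (isPrimitive_traceAddChar p) fun c => ?_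
    obtain ⟨r, hr⟩ := hS c
    rw [Finset.sum_image hinj.injOn]
    simp_rw [mul_smul_comm]
    exact sum_traceAddChar_smul_eq_of_eq_ratCast p S (c * ·) r hr ha
  exact this ▸ Finset.mem_image_of_mem _ hx

lemma exists_algebraMap_eq_of_pow_eq_self {x : F} (hx : x ^ p = x) :
    ∃ a : ZMod p, algebraMap (ZMod p) F a = x := by
  have : CharP F p := charP_of_injective_algebraMap (algebraMap (ZMod p) F).injective p
  exact (bot_le : ⊥ ≤ (algebraMap (ZMod p) F).fieldRange)
    ((Subfield.mem_bot_iff_pow_eq_self F p).mpr hx)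

lemma exists_algebraMap_eq_pow_div {m : ℕ} {ω : Fˣ} (hord : orderOf ω = p ^ m - 1) :
    ∃ a : ZMod p, a ≠ 0 ∧ algebraMap (ZMod p) F a = ↑(ω ^ ((p ^ m - 1) / (p - 1))) := by
  have hp : p.Prime := Fact.out
  set x := ω ^ ((p ^ m - 1) / (p - 1))
  have hx : x ^ (p - 1) = 1 := by
    rw [← pow_mul, Nat.div_mul_cancel (by simpa using Nat.sub_dvd_pow_sub_pow p 1 m), ← hord,
      pow_orderOf_eq_one]
  have hxp : x ^ p = x := by rw [← Nat.sub_add_cancel hp.one_le, pow_succ, hx, one_mul]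
  obtain ⟨a, ha⟩ := exists_algebraMap_eq_of_pow_eq_self p (x := (x : F))
    (by rw [← Units.val_pow_eq_pow_val, hxp])
  refine ⟨a, ?_, ha⟩
  rintro rfl
  exact x.ne_zero (by simpa using ha.symm)

end TraceAddChar

lemma dvd_of_pow_eq_pow_of_dvd_orderOf {G : Type*} [LeftCancelMonoid G] {ω y : G}
    (hy : y ∈ Submonoid.powers ω) {k d : ℕ} (hk : k ∣ orderOf ω) (h : ω ^ d = y ^ k) : k ∣ d := by
  obtain ⟨s, rfl⟩ := hy
  rw [← pow_mul, pow_eq_pow_iff_modEq] at h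
  exact (Nat.modEq_zero_iff_dvd.mp ((h.of_dvd hk).trans (Nat.modEq_zero_iff_dvd.mpr
    (dvd_mul_left k s))))

section UnitPowers

variable (F : Type*) [Field F] [Fintype F]

noncomputable def unitPowers (k : ℕ) : Finset F :=
  (univ.filter fun x : Fˣ => ∃ y : Fˣ, x = y ^ k).map ⟨Units.val, Units.val_injective⟩

variable {F}

lemma coe_mem_unitPowers {k : ℕ} {x : Fˣ} : (x : F) ∈ unitPowers F k ↔ ∃ y : Fˣ, x = y ^ k := by
  simp [unitPowers]

end UnitPowers

section GaussianPeriod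

variable {p : ℕ} [Fact p.Prime] {F : Type} [Field F] [Fintype F] [Algebra (ZMod p) F]

lemma gaussianPeriod_eq_sum_mul (ω : Fˣ) (k i : ℕ) :
    gaussianPeriod p F ω k i =
      ∑ x ∈ univ.filter (fun x : Fˣ => ∃ y : Fˣ, x = y ^ k), traceAddChar p F ↑(ω ^ i * x) := by
  rw [gaussianPeriod]
  symm
  refine Finset.sum_nbij' (ω ^ i * ·) ((ω ^ i)⁻¹ * ·) ?_ ?_ (by simp) (by simp) fun x _ => ?_
  · simp
  · simpa using fun a => ⟨a, rfl⟩
  · rw [traceAddChar_apply, ZMod.stdAddChar_apply, ZMod.toCircle_apply]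

lemma exists_sum_mul_eq_gaussianPeriod {ω : Fˣ} (hω : ∀ u : Fˣ, u ∈ Subgroup.zpowers ω)
    {k : ℕ} (hk : 0 < k) (c : Fˣ) :
    ∃ j < k, ∑ x ∈ univ.filter (fun x : Fˣ => ∃ y : Fˣ, x = y ^ k), traceAddChar p F ↑(c * x) =
      gaussianPeriod p F ω k j := by
  obtain ⟨n, rfl⟩ := mem_powers_iff_mem_zpowers.mpr (hω c)
  refine ⟨n % k, Nat.mod_lt n hk, ?_⟩
  rw [gaussianPeriod_eq_sum_mul]
  have hn : ω ^ n = ω ^ (n % k) * (ω ^ (n / k)) ^ k := by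
    rw [← pow_mul, ← pow_add, mul_comm, Nat.mod_add_div]
  refine Finset.sum_nbij' ((ω ^ (n / k)) ^ k * ·) (((ω ^ (n / k)) ^ k)⁻¹ * ·) ?_ ?_ (by simp)
    (by simp) fun x _ => by simp only [hn, mul_assoc]
  · simpa using fun a => ⟨ω ^ (n / k) * a, (mul_pow _ _ _).symm⟩
  · simpa using fun a => ⟨(ω ^ (n / k))⁻¹ * a, by rw [mul_pow, inv_pow]⟩

lemma exists_ratCast_sum_unitPowers {ω : Fˣ} (hω : ∀ u : Fˣ, u ∈ Subgroup.zpowers ω) {k : ℕ}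
    (hk : 0 < k) (hrat : ∀ j < k, ∃ r : ℚ, gaussianPeriod p F ω k j = r) (c : F) :
    ∃ r : ℚ, ∑ s ∈ unitPowers F k, traceAddChar p F (c * s) = r := by
  rcases eq_or_ne c 0 with rfl | hc
  · exact ⟨#(unitPowers F k), by simp⟩
  obtain ⟨j, hj, hsum⟩ := exists_sum_mul_eq_gaussianPeriod (p := p) hω hk (Units.mk0 c hc)
  obtain ⟨r, hr⟩ := hrat j hj
  exact ⟨r, by simpa [unitPowers] using hsum.trans hr⟩

end GaussianPeriod

theorem stmt_8_general (p m k : ℕ) (hp : p.Prime)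
    (F : Type) [Field F] [Fintype F] [Algebra (ZMod p) F]
    (hF : Fintype.card F = p ^ m)
    (ω : Fˣ) (hω : ∀ u : Fˣ, u ∈ Subgroup.zpowers ω)
    (hk : 0 < k) (hkq : k ∣ p ^ m - 1)
    (h : ¬ k ∣ (p ^ m - 1) / (p - 1)) :
    ∃ j < k, ∀ r : ℚ, gaussianPeriod p F ω k j ≠ (r : ℂ) := by
  have : Fact p.Prime := ⟨hp⟩
  by_contra! hrat
  have hord : orderOf ω = p ^ m - 1 := by
    rw [orderOf_eq_card_of_forall_mem_zpowers hω, Nat.card_eq_fintype_card, Fintype.card_units, hF]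
  obtain ⟨a, ha0, ha⟩ := exists_algebraMap_eq_pow_div p hord
  have hmem : a • (1 : F) ∈ unitPowers F k :=
    smul_mem_of_forall_sum_eq_ratCast p _ (exists_ratCast_sum_unitPowers hω hk hrat) ha0
      (coe_mem_unitPowers.mpr ⟨1, (one_pow k).symm⟩)
  rw [Algebra.smul_def, mul_one, ha, coe_mem_unitPowers] at hmem
  obtain ⟨y, hy⟩ := hmem
  have hy' : y ∈ Submonoid.powers ω := mem_powers_iff_mem_zpowers.mpr (hω y)
  have hkω : k ∣ orderOf ω := hord ▸ hkq
  exact h (dvd_of_pow_eq_pow_of_dvd_orderOf hy' hkω hy)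

theorem stmt_8 (p m k : ℕ) (hp : p.Prime) (hm : 0 < m)
    (F : Type) [Field F] [Fintype F] [Algebra (ZMod p) F]
    (hF : Fintype.card F = p ^ m)
    (ω : Fˣ) (hω : ∀ u : Fˣ, u ∈ Subgroup.zpowers ω)
    (hk : 0 < k) (hkq : k ∣ p ^ m - 1)
    (h : ¬ k ∣ (p ^ m - 1) / (p - 1)) :
    ∃ j < k, ∀ r : ℚ, gaussianPeriod p F ω k j ≠ (r : ℂ) :=
  stmt_8_general p m k hp F hF ω hω hk hkq h
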